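/- Let n ≥ 2 and let L : [0,T] → ℝ^{n×n} be a C³ family of Minkowski-symmetric matrices with L(0) = id, L′(0) = 0, and L″(0) = −(2/3) B₀, where B₀ ∈ ℝ^{n×n} is null negative-definite. Then there exists δ > 0 such that −L(t) is null negative-definite for all t ∈ (0,δ); equivalently, ⟨L(t)v, v⟩ > 0 for every t ∈ (0,δ) and every nonzero null vector v ∈ ℝⁿ. -/

import Mathlib

open Matrix Set

noncomputable section

/-- The Minkowski inner product on `ℝⁿ`: `⟨v,w⟩ = -v₀w₀ + Σ_{j≥1} vⱼwⱼ`. -/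
def mink {n : ℕ} (v w : Fin n → ℝ) : ℝ :=
  ∑ j : Fin n, (if (j : ℕ) = 0 then -(v j * w j) else v j * w j)

/-- A vector is null if its Minkowski square vanishes. -/
def IsNull {n : ℕ} (v : Fin n → ℝ) : Prop := mink v v = 0

/-- A matrix is symmetric with respect to the Minkowski inner product. -/
def MinkSymm {n : ℕ} (L : Matrix (Fin n) (Fin n) ℝ) : Prop :=
  ∀ v w : Fin n → ℝ, mink (L.mulVec v) w = mink v (L.mulVec w)

/-- A matrix is null negative-definite: `⟨Lv,v⟩ < 0` for all nonzero null `v`. -/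
def NullNegDef {n : ℕ} (L : Matrix (Fin n) (Fin n) ℝ) : Prop :=
  ∀ v : Fin n → ℝ, v ≠ 0 → IsNull v → mink (L.mulVec v) v < 0

/-- A matrix is null negative semi-definite: `⟨Lv,v⟩ ≤ 0` for all null `v`. -/
def NullNegSemi {n : ℕ} (L : Matrix (Fin n) (Fin n) ℝ) : Prop :=
  ∀ v : Fin n → ℝ, IsNull v → mink (L.mulVec v) v ≤ 0

/-- Entrywise derivative (within a set) of a matrix-valued function of a real variable. -/
def matDerivWithin {n : ℕ} (L : ℝ → Matrix (Fin n) (Fin n) ℝ) (s : Set ℝ) (t : ℝ) :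
    Matrix (Fin n) (Fin n) ℝ :=
  Matrix.of fun i j => derivWithin (fun u => L u i j) s t

/-
On the compact set of null vectors of norm one, `⟨B₀ v, v⟩ ≤ -m` for some `m > 0`. By Taylor's
theorem `L t = 1 - (t²/3) B₀ + R t` with `R t = o(t²)` entrywise, and `⟨v, v⟩ = 0` for null `v`,
so `⟨L t v, v⟩ ≥ (t²/3) m - |⟨R t v, v⟩| > 0` for small `t > 0`. Both sides are quadratic in `v`,
so positivity on the normalized null vectors gives it on all nonzero null vectors.
-/

open Filter Topology Asymptotics

def minkSign (n : ℕ) : Fin n → ℝ := fun i => if (i : ℕ) = 0 then -1 else 1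

def nullSphere (n : ℕ) : Set (Fin n → ℝ) := {v | IsNull v} ∩ Metric.sphere 0 1

section

variable {n : ℕ}

lemma abs_minkSign (i : Fin n) : |minkSign n i| = 1 := by
  unfold minkSign; split_ifs <;> simp

lemma mink_eq_dotProduct (v w : Fin n → ℝ) : mink v w = v ⬝ᵥ (minkSign n * w) := by
  refine Finset.sum_congr rfl fun i _ => ?_
  simp only [minkSign, Pi.mul_apply]
  split_ifs <;> ring

lemma mink_add_left (u v w : Fin n → ℝ) : mink (u + v) w = mink u w + mink v w := by
  simp only [mink_eq_dotProduct, add_dotProduct]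

lemma mink_sub_left (u v w : Fin n → ℝ) : mink (u - v) w = mink u w - mink v w := by
  simp only [mink_eq_dotProduct, sub_dotProduct]

lemma mink_smul_left (c : ℝ) (v w : Fin n → ℝ) : mink (c • v) w = c * mink v w := by
  simp only [mink_eq_dotProduct, smul_dotProduct, smul_eq_mul]

lemma mink_smul_right (c : ℝ) (v w : Fin n → ℝ) : mink v (c • w) = c * mink v w := by
  simp only [mink_eq_dotProduct, mul_smul_comm, dotProduct_smul, smul_eq_mul]

lemma mink_mulVec_smul_self (A : Matrix (Fin n) (Fin n) ℝ) (c : ℝ) (v : Fin n → ℝ) :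
    mink (A *ᵥ (c • v)) (c • v) = c ^ 2 * mink (A *ᵥ v) v := by
  rw [mulVec_smul, mink_smul_left, mink_smul_right]; ring

lemma IsNull.smul {v : Fin n → ℝ} (hv : IsNull v) (c : ℝ) : IsNull (c • v) := by
  have h := mink_mulVec_smul_self 1 c v
  simp only [one_mulVec] at h
  rw [IsNull, h, show mink v v = 0 from hv, mul_zero]

lemma continuous_mink_mulVec_self (A : Matrix (Fin n) (Fin n) ℝ) :
    Continuous fun v : Fin n → ℝ => mink (A *ᵥ v) v := by
  simp only [mink_eq_dotProduct]
  fun_prop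

lemma abs_mink_mulVec_self_le (A : Matrix (Fin n) (Fin n) ℝ) {v : Fin n → ℝ} (hv : ‖v‖ ≤ 1) :
    |mink (A *ᵥ v) v| ≤ ∑ i, ∑ j, |A i j| := by
  have hcoord (i : Fin n) : |v i| ≤ 1 := (norm_le_pi_norm v i).trans hv
  have hterm (i j : Fin n) : |A i j * v j * (minkSign n i * v i)| ≤ |A i j| := by
    rw [abs_mul, abs_mul, abs_mul, abs_minkSign, one_mul, mul_assoc]
    exact mul_le_of_le_one_right (abs_nonneg _)
      (mul_le_one₀ (hcoord j) (abs_nonneg _) (hcoord i))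
  calc |mink (A *ᵥ v) v| = |∑ i, ∑ j, A i j * v j * (minkSign n i * v i)| := by
        simp only [mink_eq_dotProduct, dotProduct, mulVec, Pi.mul_apply, Finset.sum_mul]
    _ ≤ ∑ i, |∑ j, A i j * v j * (minkSign n i * v i)| := Finset.abs_sum_le_sum_abs _ _
    _ ≤ ∑ i, ∑ j, |A i j| := Finset.sum_le_sum fun i _ =>
        (Finset.abs_sum_le_sum_abs _ _).trans (Finset.sum_le_sum fun j _ => hterm i j)

lemma isCompact_nullSphere (n : ℕ) : IsCompact (nullSphere n) :=
  (isCompact_sphere 0 1).inter_left <|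
    isClosed_eq (by simpa using continuous_mink_mulVec_self (1 : Matrix (Fin n) (Fin n) ℝ))
      continuous_const

lemma NullNegDef.exists_pos_bound {B : Matrix (Fin n) (Fin n) ℝ} (hB : NullNegDef B) :
    ∃ m > 0, ∀ v ∈ nullSphere n, mink (B *ᵥ v) v ≤ -m := by
  rcases (nullSphere n).eq_empty_or_nonempty with hempty | hne
  · exact ⟨1, one_pos, by simp [hempty]⟩
  obtain ⟨v₀, hv₀, hmax⟩ :=
    (isCompact_nullSphere n).exists_isMaxOn hne (continuous_mink_mulVec_self B).continuousOn
  have hv₀ne : v₀ ≠ 0 := ne_zero_of_mem_unit_sphere (⟨v₀, hv₀.2⟩ : Metric.sphere _ _)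
  exact ⟨_, neg_pos.2 (hB v₀ hv₀ne hv₀.1), fun v hv => by simpa using hmax hv⟩

lemma mink_mulVec_self_pos_of_forall_nullSphere {A : Matrix (Fin n) (Fin n) ℝ}
    (hA : ∀ w ∈ nullSphere n, 0 < mink (A *ᵥ w) w) {v : Fin n → ℝ} (hv : v ≠ 0)
    (hnull : IsNull v) : 0 < mink (A *ᵥ v) v := by
  have hnorm : 0 < ‖v‖ := norm_pos_iff.2 hv
  have hw : ‖v‖⁻¹ • v ∈ nullSphere n :=
    ⟨hnull.smul _, by simp [norm_smul, hnorm.ne']⟩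
  have h := hA _ hw
  rw [mink_mulVec_smul_self] at h
  exact pos_of_mul_pos_right h (by positivity)

lemma mink_mulVec_self_pos_of_sum_abs_sub_lt {A B : Matrix (Fin n) (Fin n) ℝ} {c m : ℝ}
    (hB : ∀ v ∈ nullSphere n, mink (B *ᵥ v) v ≤ -m) (hc : 0 ≤ c)
    (hA : ∑ i, ∑ j, |(A - (1 - c • B)) i j| < c * m) {v : Fin n → ℝ} (hv : v ∈ nullSphere n) :
    0 < mink (A *ᵥ v) v := by
  set D := A - (1 - c • B)
  have hsplit : mink (A *ᵥ v) v = mink v v - c * mink (B *ᵥ v) v + mink (D *ᵥ v) v := by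
    rw [show A = 1 - c • B + D from (add_sub_cancel _ _).symm, add_mulVec, sub_mulVec,
      one_mulVec, smul_mulVec, mink_add_left, mink_sub_left, mink_smul_left]
  have hD := abs_le.1 (abs_mink_mulVec_self_le D (mem_sphere_zero_iff_norm.1 hv.2).le)
  have hBv := mul_le_mul_of_nonneg_left (hB v hv) hc
  rw [hsplit, show mink v v = 0 from hv.1]
  linarith [hD.1]

lemma isLittleO_sub_taylor_two {g : ℝ → ℝ} {s : Set ℝ} {x₀ : ℝ} (hs : Convex ℝ s)
    (hx₀ : x₀ ∈ s) (hg : ContDiffOn ℝ 2 g s) :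
    (fun t => g t - (g x₀ + derivWithin g s x₀ * (t - x₀)
      + derivWithin (derivWithin g s) s x₀ * (t - x₀) ^ 2 / 2)) =o[𝓝[s] x₀]
      fun t => (t - x₀) ^ 2 := by
  refine (taylor_isLittleO hs hx₀ hg).congr_left fun t => ?_
  simp [taylorWithinEval_succ, iteratedDerivWithin_succ']
  ring

lemma isLittleO_sum_abs_taylor_remainder {L : ℝ → Matrix (Fin n) (Fin n) ℝ}
    {B : Matrix (Fin n) (Fin n) ℝ} {s : Set ℝ} {c : ℝ} (hs : Convex ℝ s) (h0 : 0 ∈ s)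
    (hL : ∀ i j, ContDiffOn ℝ 2 (fun t => L t i j) s) (hL0 : L 0 = 1)
    (hL1 : matDerivWithin L s 0 = 0)
    (hL2 : matDerivWithin (fun t => matDerivWithin L s t) s 0 = -c • B) :
    (fun t : ℝ => ∑ i, ∑ j, |(L t - (1 - (c * t ^ 2 / 2) • B) : Matrix (Fin n) (Fin n) ℝ) i j|)
      =o[𝓝[s] 0] fun t => t ^ 2 := by
  refine IsLittleO.fun_sum fun i _ => IsLittleO.fun_sum fun j _ => ?_
  have h := isLittleO_sub_taylor_two hs h0 (hL i j)
  have h1 := congrFun₂ hL1 i j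
  have h2 := congrFun₂ hL2 i j
  simp only [matDerivWithin, of_apply, Matrix.zero_apply, Matrix.smul_apply, smul_eq_mul] at h1 h2
  simp only [h1, h2, hL0, sub_zero] at h
  refine (h.congr_left fun t => ?_).abs_left
  simp only [Matrix.sub_apply, Matrix.smul_apply, smul_eq_mul]
  ring

end

theorem stmt_6_general {n : ℕ} (T : ℝ) (hT : 0 < T)
    (B₀ : Matrix (Fin n) (Fin n) ℝ) (hB₀ : NullNegDef B₀)
    (L : ℝ → Matrix (Fin n) (Fin n) ℝ)
    (hL : ∀ i j, ContDiffOn ℝ 3 (fun t => L t i j) (Set.Icc 0 T))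
    (hL0 : L 0 = 1)
    (hL1 : matDerivWithin L (Set.Icc 0 T) 0 = 0)
    (hL2 : matDerivWithin (fun t => matDerivWithin L (Set.Icc 0 T) t) (Set.Icc 0 T) 0
      = -(2 / 3 : ℝ) • B₀) :
    ∃ δ > 0, δ ≤ T ∧ ∀ t, 0 < t → t < δ → ∀ v : Fin n → ℝ, v ≠ 0 → IsNull v →
      0 < mink ((L t).mulVec v) v := by
  obtain ⟨m, hm, hBm⟩ := hB₀.exists_pos_bound
  have hR := isLittleO_sum_abs_taylor_remainder (convex_Icc 0 T) ⟨le_rfl, hT.le⟩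
    (fun i j => (hL i j).of_le (by norm_num)) hL0 hL1 hL2
  obtain ⟨δ, hδ, hδR⟩ := Metric.mem_nhdsWithin_iff.1 (hR.def (by positivity : 0 < m / 6))
  refine ⟨min δ T, lt_min hδ hT, min_le_right _ _, fun t ht htδ v hv hnull => ?_⟩
  have htδ' : |t| < δ := (abs_of_pos ht).trans_lt (htδ.trans_le (min_le_left _ _))
  have htT : t ≤ T := (htδ.trans_le (min_le_right _ _)).le
  have hclose := hδR ⟨mem_ball_zero_iff.2 htδ', ht.le, htT⟩
  simp only [mem_ofPred_eq, Real.norm_eq_abs] at hclose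
  rw [abs_of_nonneg (by positivity), abs_of_pos (by positivity)] at hclose
  -- `L t = 1 - (t²/3) B₀ + R t` with `∑ |R t i j| ≤ (m/6) t²`, against the gain `(t²/3) m`.
  refine mink_mulVec_self_pos_of_forall_nullSphere (fun w hw => ?_) hv hnull
  refine mink_mulVec_self_pos_of_sum_abs_sub_lt (c := 2 / 3 * t ^ 2 / 2) hBm (by positivity) ?_ hw
  nlinarith [pow_pos ht 2]

/-- if a `C³` family of Minkowski-symmetric matrices satisfies
`L(0) = id`, `L'(0) = 0`, `L''(0) = -(2/3) B₀` with `B₀` null negative-definite, then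
`-L(t)` is null negative-definite for all sufficiently small `t > 0`. -/
theorem stmt_6 {n : ℕ} (hn : 2 ≤ n) (T : ℝ) (hT : 0 < T)
    (B₀ : Matrix (Fin n) (Fin n) ℝ) (hB₀ : NullNegDef B₀)
    (L : ℝ → Matrix (Fin n) (Fin n) ℝ)
    (hL : ∀ i j, ContDiffOn ℝ 3 (fun t => L t i j) (Set.Icc 0 T))
    (hLsymm : ∀ t ∈ Set.Icc (0 : ℝ) T, MinkSymm (L t))
    (hL0 : L 0 = 1)
    (hL1 : matDerivWithin L (Set.Icc 0 T) 0 = 0)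
    (hL2 : matDerivWithin (fun t => matDerivWithin L (Set.Icc 0 T) t) (Set.Icc 0 T) 0
      = -(2 / 3 : ℝ) • B₀) :
    ∃ δ > 0, δ ≤ T ∧ ∀ t, 0 < t → t < δ → ∀ v : Fin n → ℝ, v ≠ 0 → IsNull v →
      0 < mink ((L t).mulVec v) v :=
  stmt_6_general T hT B₀ hB₀ L hL hL0 hL1 hL2
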